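/- arXiv:1012.3351 — 3 statements merged into one kernel-verified Lean document; each statement's English description precedes it below -/
import Mathlib

section
/- Let X be a dcpo. X is continuous (every element is the directed supremum of the elements way-below it) if and only if the supremum map sup : Idl(X) → X (defined on the ideal completion of X, ordered by inclusion) has a left adjoint, which is then given by x ↦ {y : y ≪ x}. -/
/-- An ideal of a preorder: a nonempty directed down-set. -/
def IsIdealSet {X : Type*} [Preorder X] (I : Set X) : Prop :=
  I.Nonempty ∧ DirectedOn (· ≤ ·) I ∧ ∀ ⦃a b : X⦄, a ≤ b → b ∈ I → a ∈ I

/-- The way-below relation of a dcpo, phrased via the supremum map on ideals: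
`y ≪ x` iff `y ∈ I` for every ideal `I` with `x ≤ sup I`. -/
def wayBelowI {X : Type*} [Preorder X]
    (sup : {I : Set X // IsIdealSet I} → X) (y x : X) : Prop :=
  ∀ I : {I : Set X // IsIdealSet I}, x ≤ sup I → y ∈ I.1

/-!
If `l ⊣ sup`, then `x ≤ sup (l x)` and `l x ⊆ I` whenever `x ≤ sup I`, which says exactly that
`↡x = l x`; so `↡x` is an ideal, and its supremum is `x` because `l x ⊆ ↓x` and `x ≤ sup (l x)`.
Conversely, in a continuous dcpo `↡x` is an ideal, and `↡x ⊆ I` gives `x = sup ↡x ≤ sup I`.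
-/

section

variable {X : Type*} [Preorder X]

theorem isIdealSet_Iic (x : X) : IsIdealSet (Set.Iic x) :=
  ⟨⟨x, le_rfl⟩, fun _ ha _ hb => ⟨x, le_rfl, ha, hb⟩, fun _ _ hab hb => hab.trans hb⟩

variable (sup : {I : Set X // IsIdealSet I} → X)

theorem isLowerSet_wayBelowI (x : X) : IsLowerSet {y | wayBelowI sup y x} :=
  fun _ _ hle hy I hI => I.2.2.2 hle (hy I hI)

theorem wayBelowI_subset_iff_le_sup (hsup : ∀ I, sup I ∈ upperBounds I.1) {x : X}
    (hx : IsLUB {y | wayBelowI sup y x} x) (I : {I : Set X // IsIdealSet I}) :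
    {y | wayBelowI sup y x} ⊆ I.1 ↔ x ≤ sup I :=
  ⟨fun hsub => hx.2 fun _ hy => hsup I (hsub hy), fun hle _ hy => hy I hle⟩

namespace GaloisConnection

variable {sup} {l : X → {I : Set X // IsIdealSet I}}

theorem wayBelowI_eq (hl : GaloisConnection l sup) (x : X) :
    {y | wayBelowI sup y x} = (l x).1 :=
  Set.Subset.antisymm (fun _ hy => hy (l x) (hl.le_u_l x))
    fun _ hy _ hI => hl.l_le hI hy

theorem isLUB_left_adjoint (hl : GaloisConnection l sup) (hsup : ∀ I, IsLUB I.1 (sup I))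
    (x : X) : IsLUB (l x).1 x := by
  have hx_le : x ≤ sup ⟨_, isIdealSet_Iic x⟩ := (hsup _).1 (le_refl x)
  exact ⟨fun _ hy => hl.l_le hx_le hy,
    fun _ hb => (hl.le_u_l x).trans ((hsup (l x)).2 hb)⟩

end GaloisConnection

end

/-- A dcpo `X` is continuous (every `↡x` is directed with supremum `x`) iff the
supremum map `sup : Idl(X) → X` has a left adjoint, which is then given by
`x ↦ {y | y ≪ x}`. -/
theorem stmt_13 {X : Type*} [PartialOrder X]
    (sup : {I : Set X // IsIdealSet I} → X)
    (hsup : ∀ I, IsLUB I.1 (sup I)) :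
    ((∀ x : X, ({y | wayBelowI sup y x}).Nonempty ∧
        DirectedOn (· ≤ ·) {y | wayBelowI sup y x} ∧
        IsLUB {y | wayBelowI sup y x} x) ↔
      (∃ l : X → {I : Set X // IsIdealSet I},
        ∀ (x : X) (I : {I : Set X // IsIdealSet I}), (l x).1 ⊆ I.1 ↔ x ≤ sup I)) ∧
    ((∀ x : X, ({y | wayBelowI sup y x}).Nonempty ∧
        DirectedOn (· ≤ ·) {y | wayBelowI sup y x} ∧
        IsLUB {y | wayBelowI sup y x} x) →
      ∀ (x : X) (I : {I : Set X // IsIdealSet I}),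
        ({y | wayBelowI sup y x} ⊆ I.1 ↔ x ≤ sup I)) := by
  have adjoint_of_continuous (hcont : ∀ x : X, ({y | wayBelowI sup y x}).Nonempty ∧
      DirectedOn (· ≤ ·) {y | wayBelowI sup y x} ∧ IsLUB {y | wayBelowI sup y x} x)
      (x : X) (I : {I : Set X // IsIdealSet I}) :
      {y | wayBelowI sup y x} ⊆ I.1 ↔ x ≤ sup I :=
    wayBelowI_subset_iff_le_sup sup (fun I => (hsup I).1) (hcont x).2.2 I
  refine ⟨⟨fun hcont => ?_, fun ⟨l, hl⟩ x => ?_⟩, adjoint_of_continuous⟩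
  · refine ⟨fun x => ⟨_, (hcont x).1, (hcont x).2.1, ?_⟩, adjoint_of_continuous hcont⟩
    exact fun _ _ hle hy => isLowerSet_wayBelowI sup x hle hy
  · have gc : GaloisConnection l sup := hl
    rw [gc.wayBelowI_eq x]
    exact ⟨(l x).2.1, (l x).2.2.1, gc.isLUB_left_adjoint hsup x⟩
end

section
/- Lawson duality: the category of continuous dcpos (domains) with Scott-open-filter-reflecting maps is self-dual. Concretely, for a domain X let FX be the set of Scott-open filters of X ordered by inclusion; then FX is again a domain, the map η_X : X → FFX, η_X(x) = {α ∈ FX : x ∈ α}, is an order isomorphism, and for a Scott-open-filter-reflecting map f : X → Y (meaning f⁻¹(β) ∈ FX for every β ∈ FY), the map F f : FY → FX, β ↦ f⁻¹(β), is again Scott-open-filter-reflecting. -/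
def IsDcpoP (X : Type*) [Preorder X] : Prop :=
  ∀ D : Set X, D.Nonempty → DirectedOn (· ≤ ·) D → ∃ s, IsLUB D s

def wayBelow {X : Type*} [Preorder X] (y x : X) : Prop :=
  ∀ D : Set X, D.Nonempty → DirectedOn (· ≤ ·) D →
    ∀ s, IsLUB D s → x ≤ s → ∃ d ∈ D, y ≤ d

/-- A domain: a continuous dcpo. -/
def IsContDomain (X : Type*) [Preorder X] : Prop :=
  IsDcpoP X ∧
  ∀ x : X, ({y | wayBelow y x}).Nonempty ∧
    DirectedOn (· ≤ ·) {y | wayBelow y x} ∧ IsLUB {y | wayBelow y x} x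

/-- A Scott-open filter: nonempty, upward closed, downward directed, inaccessible
by directed suprema. -/
def IsScottOpenFilter {X : Type*} [Preorder X] (α : Set X) : Prop :=
  α.Nonempty ∧
  (∀ ⦃a b : X⦄, a ≤ b → a ∈ α → b ∈ α) ∧
  (∀ a ∈ α, ∀ b ∈ α, ∃ c ∈ α, c ≤ a ∧ c ≤ b) ∧
  (∀ D : Set X, D.Nonempty → DirectedOn (· ≤ ·) D →
    ∀ s, IsLUB D s → s ∈ α → ∃ d ∈ D, d ∈ α)

/-- The poset of Scott-open filters of `X`, ordered by inclusion. -/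
abbrev SOF (X : Type*) [Preorder X] := {α : Set X // IsScottOpenFilter α}

/-! In a domain every point has a neighbourhood basis of Scott-open filters: if `y ≪ x`,
interpolating repeatedly gives a chain `⋯ ≪ z₂ ≪ z₁ ≪ x` above `y` whose upper set is a
Scott-open filter containing `x` and contained in `↑y`. Hence a filter `γ` is way below `α` in
`FX` exactly when `γ ⊆ ↑y` for some `y ∈ α`, and `FX`, whose directed suprema are unions, is
continuous. A Scott-open filter `𝒜` of `FX` equals `η x` for `x` the supremum of the directed
set of those `y` with `γ ⊆ ↑y` for some `γ ∈ 𝒜`, and `η` is an order embedding because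
Scott-open filters separate points. Finally, writing `𝒜 = η_X x`, the set of `β` with
`f⁻¹(β) ∈ 𝒜` is `η_Y (f x)`. -/

section WayBelow
variable {X : Type*} [Preorder X]

theorem wayBelow.le {y x : X} (h : wayBelow y x) : y ≤ x := by
  obtain ⟨d, rfl, hyd⟩ := h {x} ⟨x, rfl⟩ (directedOn_singleton x) x isLUB_singleton le_rfl
  exact hyd

theorem wayBelow.trans_le {y x x' : X} (h : wayBelow y x) (hx : x ≤ x') : wayBelow y x' :=
  fun D hne hdir s hs hxs => h D hne hdir s hs (hx.trans hxs)

theorem wayBelow_of_le_of_wayBelow {y w x : X} (h : y ≤ w) (hw : wayBelow w x) :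
    wayBelow y x := by
  intro D hne hdir s hs hxs
  obtain ⟨d, hd, hwd⟩ := hw D hne hdir s hs hxs
  exact ⟨d, hd, h.trans hwd⟩

theorem isScottOpenFilter_of_exists_wayBelow {α : Set X} (hne : α.Nonempty)
    (hup : ∀ ⦃a b : X⦄, a ≤ b → a ∈ α → b ∈ α)
    (hdir : ∀ a ∈ α, ∀ b ∈ α, ∃ c ∈ α, c ≤ a ∧ c ≤ b)
    (hwb : ∀ x ∈ α, ∃ y ∈ α, wayBelow y x) : IsScottOpenFilter α := by
  refine ⟨hne, hup, hdir, fun D hDne hDdir s hs hsα => ?_⟩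
  obtain ⟨y, hyα, hys⟩ := hwb s hsα
  obtain ⟨d, hd, hyd⟩ := hys D hDne hDdir s hs le_rfl
  exact ⟨d, hd, hup hyd hyα⟩

theorem isScottOpenFilter_of_wayBelow_succ {z : ℕ → X} (hz : ∀ n, wayBelow (z (n + 1)) (z n)) :
    IsScottOpenFilter {a | ∃ n, z n ≤ a} := by
  have hanti : Antitone z := antitone_nat_of_succ_le fun n => (hz n).le
  refine isScottOpenFilter_of_exists_wayBelow ⟨z 0, 0, le_rfl⟩ ?_ ?_ ?_
  · rintro a b hab ⟨n, hn⟩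
    exact ⟨n, hn.trans hab⟩
  · rintro a ⟨m, hm⟩ b ⟨n, hn⟩
    exact ⟨z (max m n), ⟨_, le_rfl⟩, (hanti (le_max_left m n)).trans hm,
      (hanti (le_max_right m n)).trans hn⟩
  · rintro a ⟨n, hn⟩
    exact ⟨z (n + 1), ⟨_, le_rfl⟩, (hz n).trans_le hn⟩

end WayBelow

namespace IsContDomain
variable {X : Type*} [Preorder X]

theorem exists_wayBelow_mem (hX : IsContDomain X) {α : Set X} (hα : IsScottOpenFilter α)
    {x : X} (hx : x ∈ α) : ∃ y ∈ α, wayBelow y x := by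
  obtain ⟨hne, hdir, hlub⟩ := hX.2 x
  obtain ⟨y, hyx, hyα⟩ := hα.2.2.2 _ hne hdir x hlub hx
  exact ⟨y, hyα, hyx⟩

theorem exists_wayBelow_wayBelow (hX : IsContDomain X) {y x : X} (h : wayBelow y x) :
    ∃ z, wayBelow y z ∧ wayBelow z x := by
  set D := {w : X | ∃ z, wayBelow w z ∧ wayBelow z x}
  have hne : D.Nonempty := by
    obtain ⟨z, hz⟩ := (hX.2 x).1
    obtain ⟨w, hw⟩ := (hX.2 z).1
    exact ⟨w, z, hw, hz⟩
  have hdir : DirectedOn (· ≤ ·) D := by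
    rintro w₁ ⟨z₁, hw₁, hz₁⟩ w₂ ⟨z₂, hw₂, hz₂⟩
    obtain ⟨z, hz, h₁, h₂⟩ := (hX.2 x).2.1 z₁ hz₁ z₂ hz₂
    obtain ⟨w, hw, hw₁w, hw₂w⟩ := (hX.2 z).2.1 w₁ (hw₁.trans_le h₁) w₂ (hw₂.trans_le h₂)
    exact ⟨w, ⟨z, hw, hz⟩, hw₁w, hw₂w⟩
  -- `x` is the supremum of `D` because each of its approximants is the supremum of its own
  have hlub : IsLUB D x := by
    refine ⟨fun w ⟨z, hwz, hzx⟩ => hwz.le.trans hzx.le, fun u hu => ?_⟩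
    exact (hX.2 x).2.2.2 fun z hz => (hX.2 z).2.2.2 fun w hw => hu ⟨z, hw, hz⟩
  obtain ⟨w, ⟨z, hwz, hzx⟩, hyw⟩ := h D hne hdir x hlub le_rfl
  exact ⟨z, wayBelow_of_le_of_wayBelow hyw hwz, hzx⟩

theorem exists_isScottOpenFilter_subset_Ici (hX : IsContDomain X) {y x : X}
    (h : wayBelow y x) : ∃ γ : Set X, IsScottOpenFilter γ ∧ x ∈ γ ∧ γ ⊆ Set.Ici y := by
  choose next hnext using fun z : {z : X // wayBelow y z} => hX.exists_wayBelow_wayBelow z.2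
  let z : ℕ → {z : X // wayBelow y z} := fun n =>
    n.rec ⟨x, h⟩ fun _ w => ⟨next w, (hnext w).1⟩
  refine ⟨_, isScottOpenFilter_of_wayBelow_succ (z := fun n => (z n).1) fun n => (hnext (z n)).2,
    ⟨0, le_rfl⟩, ?_⟩
  rintro a ⟨n, hn⟩
  exact (z n).2.le.trans hn

theorem exists_isScottOpenFilter_mem (hX : IsContDomain X) (x : X) :
    ∃ γ : Set X, IsScottOpenFilter γ ∧ x ∈ γ := by
  obtain ⟨y, hy⟩ := (hX.2 x).1
  obtain ⟨γ, hγ, hxγ, -⟩ := hX.exists_isScottOpenFilter_subset_Ici hy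
  exact ⟨γ, hγ, hxγ⟩

theorem exists_isScottOpenFilter_subset_inter (hX : IsContDomain X) {α β : Set X}
    (hα : IsScottOpenFilter α) (hβ : IsScottOpenFilter β) {x : X} (hxα : x ∈ α) (hxβ : x ∈ β) :
    ∃ γ : Set X, IsScottOpenFilter γ ∧ x ∈ γ ∧ γ ⊆ α ∧ γ ⊆ β := by
  obtain ⟨y₁, hy₁, hy₁x⟩ := hX.exists_wayBelow_mem hα hxα
  obtain ⟨y₂, hy₂, hy₂x⟩ := hX.exists_wayBelow_mem hβ hxβ
  obtain ⟨y, hyx, hyy₁, hyy₂⟩ := (hX.2 x).2.1 y₁ hy₁x y₂ hy₂x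
  obtain ⟨γ, hγ, hxγ, hγy⟩ := hX.exists_isScottOpenFilter_subset_Ici hyx
  exact ⟨γ, hγ, hxγ, fun a ha => hα.2.1 (hyy₁.trans (hγy ha)) hy₁,
    fun a ha => hβ.2.1 (hyy₂.trans (hγy ha)) hy₂⟩

theorem exists_isScottOpenFilter_of_not_le (hX : IsContDomain X) {x y : X} (h : ¬x ≤ y) :
    ∃ γ : Set X, IsScottOpenFilter γ ∧ x ∈ γ ∧ y ∉ γ := by
  obtain ⟨z, hzx, hzy⟩ : ∃ z, wayBelow z x ∧ ¬z ≤ y := by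
    by_contra! H
    exact h ((hX.2 x).2.2.2 H)
  obtain ⟨γ, hγ, hxγ, hγz⟩ := hX.exists_isScottOpenFilter_subset_Ici hzx
  exact ⟨γ, hγ, hxγ, fun hy => hzy (hγz hy)⟩

end IsContDomain

namespace SOF
variable {X : Type*} [Preorder X]

theorem isScottOpenFilter_biUnion {D : Set (SOF X)} (hne : D.Nonempty)
    (hdir : DirectedOn (· ≤ ·) D) : IsScottOpenFilter (⋃ γ ∈ D, γ.1) := by
  refine ⟨?_, ?_, ?_, ?_⟩
  · obtain ⟨γ, hγ⟩ := hne
    obtain ⟨a, ha⟩ := γ.2.1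
    exact ⟨a, Set.mem_biUnion hγ ha⟩
  · intro a b hab ha
    obtain ⟨γ, hγ, haγ⟩ := Set.mem_iUnion₂.1 ha
    exact Set.mem_biUnion hγ (γ.2.2.1 hab haγ)
  · intro a ha b hb
    obtain ⟨γ, hγ, haγ⟩ := Set.mem_iUnion₂.1 ha
    obtain ⟨δ, hδ, hbδ⟩ := Set.mem_iUnion₂.1 hb
    obtain ⟨ε, hε, hγε, hδε⟩ := hdir γ hγ δ hδ
    obtain ⟨c, hc, hca, hcb⟩ := ε.2.2.2.1 a (hγε haγ) b (hδε hbδ)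
    exact ⟨c, Set.mem_biUnion hε hc, hca, hcb⟩
  · intro E hEne hEdir s hs hsD
    obtain ⟨γ, hγ, hsγ⟩ := Set.mem_iUnion₂.1 hsD
    obtain ⟨d, hd, hdγ⟩ := γ.2.2.2.2 E hEne hEdir s hs hsγ
    exact ⟨d, hd, Set.mem_biUnion hγ hdγ⟩

theorem isLUB_biUnion {D : Set (SOF X)} (hne : D.Nonempty) (hdir : DirectedOn (· ≤ ·) D) :
    IsLUB D ⟨⋃ γ ∈ D, γ.1, isScottOpenFilter_biUnion hne hdir⟩ :=
  ⟨fun _ hγ => Set.subset_biUnion_of_mem hγ, fun _ hu => Set.iUnion₂_subset fun _ hγ => hu hγ⟩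

theorem isDcpoP : IsDcpoP (SOF X) :=
  fun _ hne hdir => ⟨_, isLUB_biUnion hne hdir⟩

def lowerApprox (α : SOF X) : Set (SOF X) :=
  {γ | ∃ y ∈ α.1, γ.1 ⊆ Set.Ici y}

theorem wayBelow_of_mem_lowerApprox {γ α : SOF X} (h : γ ∈ lowerApprox α) : wayBelow γ α := by
  obtain ⟨y, hyα, hγy⟩ := h
  intro D hne hdir s hs hαs
  obtain rfl := hs.unique (isLUB_biUnion hne hdir)
  obtain ⟨d, hd, hyd⟩ := Set.mem_iUnion₂.1 (hαs hyα)
  exact ⟨d, hd, hγy.trans fun a ha => d.2.2.1 ha hyd⟩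

theorem exists_mem_lowerApprox (hX : IsContDomain X) {α : SOF X} {x : X} (hx : x ∈ α.1) :
    ∃ γ ∈ lowerApprox α, x ∈ γ.1 := by
  obtain ⟨y, hyα, hyx⟩ := hX.exists_wayBelow_mem α.2 hx
  obtain ⟨γ, hγ, hxγ, hγy⟩ := hX.exists_isScottOpenFilter_subset_Ici hyx
  exact ⟨⟨γ, hγ⟩, ⟨y, hyα, hγy⟩, hxγ⟩

theorem lowerApprox_nonempty (hX : IsContDomain X) (α : SOF X) : (lowerApprox α).Nonempty := by
  obtain ⟨x, hx⟩ := α.2.1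
  obtain ⟨γ, hγ, -⟩ := exists_mem_lowerApprox hX hx
  exact ⟨γ, hγ⟩

theorem directedOn_lowerApprox (hX : IsContDomain X) (α : SOF X) :
    DirectedOn (· ≤ ·) (lowerApprox α) := by
  rintro γ₁ ⟨y₁, hy₁, hγ₁⟩ γ₂ ⟨y₂, hy₂, hγ₂⟩
  obtain ⟨y, hyα, hyy₁, hyy₂⟩ := α.2.2.2.1 y₁ hy₁ y₂ hy₂
  obtain ⟨γ, hγ, hyγ⟩ := exists_mem_lowerApprox hX hyα
  have hIci : Set.Ici y ⊆ γ.1 := fun a ha => γ.2.2.1 ha hyγ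
  exact ⟨γ, hγ, fun a ha => hIci (hyy₁.trans (hγ₁ ha)), fun a ha => hIci (hyy₂.trans (hγ₂ ha))⟩

theorem isLUB_lowerApprox (hX : IsContDomain X) (α : SOF X) : IsLUB (lowerApprox α) α := by
  refine ⟨fun γ ⟨y, hyα, hγy⟩ a ha => α.2.2.1 (hγy ha) hyα, fun u hu x hx => ?_⟩
  obtain ⟨γ, hγ, hxγ⟩ := exists_mem_lowerApprox hX hx
  exact hu hγ hxγ

theorem wayBelow_iff_mem_lowerApprox (hX : IsContDomain X) {γ α : SOF X} :
    wayBelow γ α ↔ γ ∈ lowerApprox α := by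
  refine ⟨fun h => ?_, wayBelow_of_mem_lowerApprox⟩
  obtain ⟨δ, ⟨y, hyα, hδy⟩, hγδ⟩ := h _ (lowerApprox_nonempty hX α)
    (directedOn_lowerApprox hX α) α (isLUB_lowerApprox hX α) le_rfl
  exact ⟨y, hyα, Set.Subset.trans hγδ hδy⟩

end SOF

namespace IsContDomain
variable {X : Type*} [Preorder X]

theorem sof (hX : IsContDomain X) : IsContDomain (SOF X) := by
  refine ⟨SOF.isDcpoP, fun α => ?_⟩
  have : {γ | wayBelow γ α} = SOF.lowerApprox α :=
    Set.ext fun _ => SOF.wayBelow_iff_mem_lowerApprox hX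
  rw [this]
  exact ⟨SOF.lowerApprox_nonempty hX α, SOF.directedOn_lowerApprox hX α,
    SOF.isLUB_lowerApprox hX α⟩

theorem isScottOpenFilter_setOf_mem (hX : IsContDomain X) (x : X) :
    IsScottOpenFilter {α : SOF X | x ∈ α.1} := by
  refine isScottOpenFilter_of_exists_wayBelow ?_ (fun α β hαβ hα => hαβ hα) ?_ ?_
  · obtain ⟨γ, hγ, hxγ⟩ := hX.exists_isScottOpenFilter_mem x
    exact ⟨⟨γ, hγ⟩, hxγ⟩
  · intro α hα β hβ
    obtain ⟨γ, hγ, hxγ, hγα, hγβ⟩ := hX.exists_isScottOpenFilter_subset_inter α.2 β.2 hα hβ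
    exact ⟨⟨γ, hγ⟩, hxγ, hγα, hγβ⟩
  · intro α hα
    obtain ⟨γ, hγ, hxγ⟩ := SOF.exists_mem_lowerApprox hX hα
    exact ⟨γ, hxγ, SOF.wayBelow_of_mem_lowerApprox hγ⟩

theorem exists_mem_subset_Ici_of_mem (hX : IsContDomain X) {𝒜 : Set (SOF X)}
    (h𝒜 : IsScottOpenFilter 𝒜) {γ : SOF X} (hγ : γ ∈ 𝒜) :
    ∃ y ∈ γ.1, ∃ γ' ∈ 𝒜, γ'.1 ⊆ Set.Ici y := by
  obtain ⟨γ', hγ', hγ'γ⟩ := hX.sof.exists_wayBelow_mem h𝒜 hγ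
  obtain ⟨y, hyγ, hγ'y⟩ := (SOF.wayBelow_iff_mem_lowerApprox hX).1 hγ'γ
  exact ⟨y, hyγ, γ', hγ', hγ'y⟩

end IsContDomain

namespace SOF
variable {X : Type*} [Preorder X]

def eta (hX : IsContDomain X) (x : X) : SOF (SOF X) :=
  ⟨{α | x ∈ α.1}, hX.isScottOpenFilter_setOf_mem x⟩

theorem eta_le_eta_iff (hX : IsContDomain X) {x y : X} : eta hX x ≤ eta hX y ↔ x ≤ y := by
  refine ⟨fun h => ?_, fun h α hα => α.2.2.1 h hα⟩
  by_contra hxy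
  obtain ⟨γ, hγ, hxγ, hyγ⟩ := hX.exists_isScottOpenFilter_of_not_le hxy
  exact hyγ (h (show (⟨γ, hγ⟩ : SOF X) ∈ (eta hX x).1 from hxγ))

theorem eta_surjective (hX : IsContDomain X) : Function.Surjective (eta hX) := by
  intro 𝒜
  set S := {y : X | ∃ γ ∈ 𝒜.1, γ.1 ⊆ Set.Ici y}
  have hS : ∀ γ ∈ 𝒜.1, ∃ y ∈ γ.1, y ∈ S := fun γ hγ => hX.exists_mem_subset_Ici_of_mem 𝒜.2 hγ
  have hSne : S.Nonempty := by
    obtain ⟨γ, hγ⟩ := 𝒜.2.1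
    obtain ⟨y, -, hy⟩ := hS γ hγ
    exact ⟨y, hy⟩
  have hSdir : DirectedOn (· ≤ ·) S := by
    rintro y₁ ⟨γ₁, hγ₁, hγ₁y⟩ y₂ ⟨γ₂, hγ₂, hγ₂y⟩
    obtain ⟨γ, hγ, hγγ₁, hγγ₂⟩ := 𝒜.2.2.2.1 γ₁ hγ₁ γ₂ hγ₂
    obtain ⟨y, hyγ, hyS⟩ := hS γ hγ
    exact ⟨y, hyS, hγ₁y (hγγ₁ hyγ), hγ₂y (hγγ₂ hyγ)⟩
  obtain ⟨x, hx⟩ := hX.1 S hSne hSdir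
  refine ⟨x, Subtype.ext (Set.ext fun γ => ⟨fun hxγ => ?_, fun hγ => ?_⟩)⟩
  · obtain ⟨y, ⟨δ, hδ, hδy⟩, hyγ⟩ := γ.2.2.2.2 S hSne hSdir x hx hxγ
    exact 𝒜.2.2.1 (fun a ha => γ.2.2.1 (hδy ha) hyγ) hδ
  · obtain ⟨y, hyγ, hyS⟩ := hS γ hγ
    exact γ.2.2.1 (hx.1 hyS) hyγ

end SOF

/-- Lawson duality: for domains `X`, `Y`, the poset `FX` of Scott-open filters is
again a domain, `η_X : x ↦ {α ∈ FX | x ∈ α}` is an order isomorphism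
`X ≅ FFX`, and for any Scott-open-filter-reflecting `f : X → Y`, the map
`F f : FY → FX`, `β ↦ f⁻¹(β)`, again reflects Scott-open filters.  Hence the
category of domains with Scott-open-filter-reflecting maps is self-dual. -/
theorem stmt_15 {X Y : Type*} [PartialOrder X] [PartialOrder Y]
    (hX : IsContDomain X) (hY : IsContDomain Y)
    (f : X → Y)
    (hf : ∀ β : Set Y, IsScottOpenFilter β → IsScottOpenFilter (f ⁻¹' β)) :
    IsContDomain (SOF X) ∧
    (∃ e : X ≃o SOF (SOF X), ∀ (x : X) (α : SOF X), α ∈ (e x).1 ↔ x ∈ α.1) ∧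
    (∀ 𝒜 : Set (SOF X), IsScottOpenFilter 𝒜 →
      IsScottOpenFilter {β : SOF Y | (⟨f ⁻¹' β.1, hf β.1 β.2⟩ : SOF X) ∈ 𝒜}) := by
  let e : X ≃o SOF (SOF X) :=
    .ofSurjective (.ofMapLEIff (SOF.eta hX) fun _ _ => SOF.eta_le_eta_iff hX)
      (SOF.eta_surjective hX)
  refine ⟨hX.sof, ⟨e, fun _ _ => Iff.rfl⟩, fun 𝒜 h𝒜 => ?_⟩
  obtain ⟨x, hx⟩ := SOF.eta_surjective hX ⟨𝒜, h𝒜⟩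
  obtain rfl : {α : SOF X | x ∈ α.1} = 𝒜 := congrArg Subtype.val hx
  exact hY.isScottOpenFilter_setOf_mem (f x)
end

section
/- For Q = ([0,∞], ≥, +, 0) and J the class of 'formal ball' modules (ψ of the form ψ(y) = X(y,x) + u for some x ∈ X, u ∈ [0,∞]), a generalized metric space X is J-cocomplete if and only if X admits tensors: for every x ∈ X and u ∈ [0,∞] there exists z ∈ X (denoted u ⊗ x) with X(z,y) = hom(u, X(x,y)) = X(x,y) ∸ u (truncated subtraction, i.e. max(X(x,y) − u, 0) when u < ∞) for all y ∈ X. -/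
open scoped ENNReal

/-- For the Lawvere quantale `([0,∞], ≥, +, 0)` (internal hom = truncated
subtraction) and `J` the class of formal-ball modules `ψ(y) = d(y,x) + u`, a
generalized metric space is `J`-cocomplete (every such `ψ` has a supremum `z`,
characterized by `d(z,y) = X̂(ψ, y_X y) = ⨆_w (d(w,y) ∸ ψ(w))`) iff it admits
tensors: for all `x, u` there is `z` with `d(z,y) = d(x,y) ∸ u` for all `y`. -/
theorem stmt_18 {X : Type*} (d : X → X → ℝ≥0∞)
    (hrefl : ∀ x, d x x = 0)
    (htri : ∀ x y z, d x z ≤ d x y + d y z) :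
    (∀ ψ : X → ℝ≥0∞, (∃ (x : X) (u : ℝ≥0∞), ∀ y, ψ y = d y x + u) →
      ∃ z : X, ∀ y, d z y = ⨆ w, (d w y - ψ w)) ↔
    (∀ (x : X) (u : ℝ≥0∞), ∃ z : X, ∀ y, d z y = d x y - u) := by
  have key : ∀ (x : X) (u : ℝ≥0∞) (y : X),
      (⨆ w, (d w y - (d w x + u))) = d x y - u := by
    intro x u y
    apply le_antisymm
    · refine iSup_le fun w => ?_
      calc d w y - (d w x + u) = d w y - d w x - u := by
            rw [tsub_add_eq_tsub_tsub]
        _ ≤ d x y - u :=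
            tsub_le_tsub_right (tsub_le_iff_left.mpr (htri w x y)) u
    · simpa [hrefl x] using le_iSup (fun w => d w y - (d w x + u)) x
  constructor
  · intro h x u
    obtain ⟨z, hz⟩ := h (fun y => d y x + u) ⟨x, u, fun _ => rfl⟩
    exact ⟨z, fun y => by rw [hz y, key]⟩
  · intro h ψ hψ
    obtain ⟨x, u, hxu⟩ := hψ
    obtain ⟨z, hz⟩ := h x u
    refine ⟨z, fun y => ?_⟩
    simp only [hxu]
    rw [hz y, key]
end
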